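/- Let k ≥ 1 and 0 < ε < 1/2, set δ = ε/2 and n₀ = 2k/ε. If G is a C_{2k+1}-free graph on n ≥ n₀ vertices with e(G) ≥ (1/4 − δ)n², then G can be made bipartite by deleting at most εn² edges. -/

import Mathlib

set_option linter.unusedSectionVars false
set_option maxHeartbeats 1000000
open Finset

section Aux
variable {V : Type*} [Fintype V] [DecidableEq V]

lemma exists_walk_of_chain (G : SimpleGraph V) :
    ∀ (l : List V), l ≠ [] → l.Chain' G.Adj →
      ∃ (a b : V) (w : G.Walk a b), w.support = l
  | [], h, _ => absurd rfl h
  | [x], _, _ => ⟨x, x, SimpleGraph.Walk.nil, by simp⟩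
  | x :: y :: t, _, hc => by
      obtain ⟨a, b, w, hw⟩ := exists_walk_of_chain G (y :: t) (by simp) hc.tail
      have ha : a = y := by
        have h2 := w.support_eq_cons
        rw [hw] at h2
        exact (List.cons.injEq _ _ _ _ ▸ h2).1.symm
      subst ha
      have hadj : G.Adj x a := (List.isChain_cons_cons.mp hc).1
      exact ⟨x, b, SimpleGraph.Walk.cons hadj w, by simp [hw]⟩

/-- In a `C_{2k+1}`-free graph, chains inside a neighborhood have ≤ 2k-1 vertices. -/
lemma nbhd_chain_short (G : SimpleGraph V) [DecidableRel G.Adj] (k : ℕ) (hk : 1 ≤ k)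
    (hfree : ∀ (v : V) (w : G.Walk v v), w.IsCycle → w.length ≠ 2 * k + 1) (v : V) :
    ∀ l : List V, l.Chain' G.Adj → l.Nodup → (∀ x ∈ l, x ∈ G.neighborFinset v) →
      l.length ≤ 2 * k - 1 := by
  intro l hc hn hsub
  by_contra hlong
  push_neg at hlong
  have hlen : 2 * k ≤ l.length := by omega
  set l' := l.take (2 * k) with hl'
  have hl'len : l'.length = 2 * k := by simp [hl', hlen]
  have hl'ne : l' ≠ [] := by
    intro h; rw [h] at hl'len; simp at hl'len; omega
  have hl'c : l'.Chain' G.Adj := hc.prefix (l.take_prefix _)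
  have hl'n : l'.Nodup := hn.sublist (l.take_sublist _)
  have hl'sub : ∀ x ∈ l', x ∈ G.neighborFinset v := fun x hx => hsub x (l.take_subset _ hx)
  obtain ⟨a, b, w, hw⟩ := exists_walk_of_chain G l' hl'ne hl'c
  have hpath : w.IsPath := by rw [SimpleGraph.Walk.isPath_def, hw]; exact hl'n
  have hsupS : ∀ x ∈ w.support, G.Adj v x := by
    intro x hx; rw [hw] at hx
    exact (SimpleGraph.mem_neighborFinset _ _ _).mp (hl'sub x hx)
  have hva : G.Adj v a := hsupS a w.start_mem_support
  have hvb : G.Adj v b := hsupS b w.end_mem_support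
  have hvnot : v ∉ w.support := fun h => G.loopless.irrefl v (hsupS v h)
  have hwlen : w.length = 2 * k - 1 := by
    have := w.length_support
    rw [hw, hl'len] at this; omega
  -- concat to v
  set p' := w.concat hvb.symm with hp'
  have hp'path : p'.IsPath := by
    rw [SimpleGraph.Walk.isPath_def, hp', SimpleGraph.Walk.support_concat]
    rw [List.nodup_append]
    exact ⟨hpath.support_nodup, List.nodup_singleton _,
      fun a ha b hb => by rw [List.mem_singleton] at hb; subst hb; rintro rfl; exact hvnot ha⟩
  have hab : a ≠ b := by
    intro hEq
    subst hEq
    rw [SimpleGraph.Walk.isPath_iff_eq_nil] at hpath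
    rw [hpath] at hwlen
    simp [SimpleGraph.Walk.length_nil] at hwlen
    omega
  -- close the cycle
  set c := SimpleGraph.Walk.cons hva p' with hcdef
  have hcyc : c.IsCycle := by
    rw [SimpleGraph.Walk.cons_isCycle_iff]
    refine ⟨hp'path, ?_⟩
    intro hmem
    rw [hp', SimpleGraph.Walk.edges_concat, List.concat_eq_append, List.mem_append] at hmem
    rcases hmem with hmem | hmem
    · exact hvnot (w.fst_mem_support_of_mem_edges hmem)
    · simp only [List.mem_singleton] at hmem
      rw [Sym2.eq_iff] at hmem
      rcases hmem with ⟨h1, h2⟩ | ⟨h1, h2⟩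
      · exact hvnot (h1 ▸ w.end_mem_support)
      · exact hab h2
  have hclen : c.length = 2 * k + 1 := by
    rw [hcdef, SimpleGraph.Walk.length_cons, hp', SimpleGraph.Walk.length_concat, hwlen]
    omega
  exact hfree v c hcyc hclen

/-- Ordered count of adjacent pairs inside `U`. -/
def E2 (G : SimpleGraph V) [DecidableRel G.Adj] (U : Finset V) : ℕ :=
  ((U ×ˢ U).filter fun p : V × V => G.Adj p.1 p.2).card

lemma E2_erase (G : SimpleGraph V) [DecidableRel G.Adj] (U : Finset V) (u : V) :
    E2 G U ≤ E2 G (U.erase u) + 2 * (G.neighborFinset u ∩ U).card := by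
  classical
  have hsub : (U ×ˢ U).filter (fun p : V × V => G.Adj p.1 p.2) ⊆
      ((U.erase u ×ˢ U.erase u).filter (fun p : V × V => G.Adj p.1 p.2)) ∪
      (({u} : Finset V) ×ˢ (G.neighborFinset u ∩ U)) ∪
      ((G.neighborFinset u ∩ U) ×ˢ ({u} : Finset V)) := by
    intro p hp
    simp only [mem_filter, Finset.mem_product, mem_union, Finset.mem_singleton, mem_inter, mem_erase,
      SimpleGraph.mem_neighborFinset] at *
    obtain ⟨⟨h1, h2⟩, hadj⟩ := hp
    by_cases e1 : p.1 = u
    · exact Or.inl (Or.inr ⟨e1, e1 ▸ hadj, h2⟩)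
    · by_cases e2 : p.2 = u
      · exact Or.inr ⟨⟨(e2 ▸ hadj.symm : G.Adj u p.1), h1⟩, e2⟩
      · exact Or.inl (Or.inl ⟨⟨⟨e1, h1⟩, ⟨e2, h2⟩⟩, hadj⟩)
  have := card_le_card hsub
  have h2 : (((U.erase u ×ˢ U.erase u).filter (fun p : V × V => G.Adj p.1 p.2)) ∪
      (({u} : Finset V) ×ˢ (G.neighborFinset u ∩ U)) ∪
      ((G.neighborFinset u ∩ U) ×ˢ ({u} : Finset V))).card ≤
      ((U.erase u ×ˢ U.erase u).filter (fun p : V × V => G.Adj p.1 p.2)).card +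
      (({u} : Finset V) ×ˢ (G.neighborFinset u ∩ U)).card +
      ((G.neighborFinset u ∩ U) ×ˢ ({u} : Finset V)).card :=
    (card_union_le _ _).trans (Nat.add_le_add_right (card_union_le _ _) _)
  have hc1 : (({u} : Finset V) ×ˢ (G.neighborFinset u ∩ U)).card
      = (G.neighborFinset u ∩ U).card := by
    rw [card_product, card_singleton, one_mul]
  have hc2 : ((G.neighborFinset u ∩ U) ×ˢ ({u} : Finset V)).card
      = (G.neighborFinset u ∩ U).card := by
    rw [card_product, card_singleton, mul_one]
  have := this.trans h2
  rw [hc1, hc2] at this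
  unfold E2
  omega

lemma E2_le_offDiag (G : SimpleGraph V) [DecidableRel G.Adj] (S : Finset V) :
    E2 G S ≤ S.card * (S.card - 1) := by
  have hsub : (S ×ˢ S).filter (fun p : V × V => G.Adj p.1 p.2) ⊆ S.offDiag := by
    intro p hp
    simp only [mem_filter, Finset.mem_product, mem_offDiag] at *
    exact ⟨hp.1.1, hp.1.2, hp.2.ne⟩
  have := card_le_card hsub
  rw [offDiag_card] at this
  calc E2 G S ≤ S.card * S.card - S.card := this
    _ = S.card * (S.card - 1) := (Nat.mul_sub_one _ _).symm
  
lemma E2_split (G : SimpleGraph V) [DecidableRel G.Adj] (U S : Finset V) (hSU : S ⊆ U)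
    (hnoedge : ∀ z ∈ U, z ∉ S → ∀ x ∈ S, ¬ G.Adj z x) :
    E2 G U = E2 G S + E2 G (U \ S) := by
  classical
  have hsplit : (U ×ˢ U).filter (fun p : V × V => G.Adj p.1 p.2) =
      ((S ×ˢ S).filter (fun p : V × V => G.Adj p.1 p.2)) ∪
      (((U \ S) ×ˢ (U \ S)).filter (fun p : V × V => G.Adj p.1 p.2)) := by
    ext p
    simp only [mem_filter, Finset.mem_product, mem_union, mem_sdiff]
    constructor
    · rintro ⟨⟨h1, h2⟩, hadj⟩
      by_cases e1 : p.1 ∈ S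
      · by_cases e2 : p.2 ∈ S
        · exact Or.inl ⟨⟨e1, e2⟩, hadj⟩
        · exact absurd hadj.symm (hnoedge p.2 h2 e2 p.1 e1)
      · by_cases e2 : p.2 ∈ S
        · exact absurd hadj (hnoedge p.1 h1 e1 p.2 e2)
        · exact Or.inr ⟨⟨⟨h1, e1⟩, ⟨h2, e2⟩⟩, hadj⟩
    · rintro (⟨⟨h1, h2⟩, hadj⟩ | ⟨⟨h1, h2⟩, hadj⟩)
      · exact ⟨⟨hSU h1, hSU h2⟩, hadj⟩
      · exact ⟨⟨h1.1, h2.1⟩, hadj⟩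
  have hdisj : Disjoint ((S ×ˢ S).filter (fun p : V × V => G.Adj p.1 p.2))
      (((U \ S) ×ˢ (U \ S)).filter (fun p : V × V => G.Adj p.1 p.2)) := by
    rw [Finset.disjoint_left]
    intro p hp hp'
    simp only [mem_filter, Finset.mem_product, mem_sdiff] at *
    exact hp'.1.1.2 hp.1.1
  unfold E2
  rw [hsplit, card_union_of_disjoint hdisj]

-- cycle-list rotation: from a "cycle" list M (chain + wrap edge) and an external vertex z
-- adjacent to some x ∈ M, produce a longer chain list.
lemma cycle_rotate (G : SimpleGraph V) (M : List V) (hMne : M ≠ [])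
    (hMc : M.Chain' G.Adj) (hMn : M.Nodup)
    (hwrap : G.Adj (M.getLast hMne) (M.head hMne))
    (z x : V) (hzM : z ∉ M) (hxM : x ∈ M) (hzx : G.Adj z x) :
    ∃ l : List V, l.Chain' G.Adj ∧ l.Nodup ∧ (∀ y ∈ l, y = z ∨ y ∈ M) ∧
      l.length = M.length + 1 := by
  obtain ⟨C, D, hCD⟩ := List.append_of_mem hxM
  have hxDne : (x :: D) ≠ [] := by simp
  refine ⟨z :: ((x :: D) ++ C), ?_, ?_, ?_, ?_⟩
  · -- chain
    refine List.isChain_cons.mpr ?_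
    constructor
    · intro y hy
      simp only [List.cons_append, List.head?_cons, Option.mem_def, Option.some_inj] at hy
      rw [← hy]; exact hzx
    · apply List.IsChain.append
      · rw [hCD] at hMc; exact hMc.right_of_append
      · rw [hCD] at hMc; exact hMc.left_of_append
      · intro p hp q hq
        rcases List.eq_nil_or_concat C with hC | ⟨C', c, hC⟩
        · simp [hC] at hq
        · have hCne : C ≠ [] := by rw [hC]; simp
          have hq' : q = M.head hMne := by
            have h1 : M.head? = C.head? := by
              conv_lhs => rw [hCD]
              cases C with
              | nil => exact absurd rfl hCne
              | cons c0 C0 => simp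
            have h2 : M.head? = some (M.head hMne) := List.head?_eq_head _
            rw [h1] at h2
            rw [Option.mem_def, h2, Option.some_inj] at hq
            exact hq.symm
          have hp' : p = M.getLast hMne := by
            have h1 : M.getLast? = (x :: D).getLast? := by
              conv_lhs => rw [hCD]
              exact List.getLast?_append_of_ne_nil _ hxDne
            have h2 : M.getLast? = some (M.getLast hMne) :=
              List.getLast?_eq_getLast_of_ne_nil _
            rw [h1] at h2
            rw [Option.mem_def, h2, Option.some_inj] at hp
            exact hp.symm
          rw [hp', hq']; exact hwrap
  · -- nodup
    have hperm : ((x :: D) ++ C).Perm M := by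
      rw [hCD]; exact List.perm_append_comm
    rw [List.nodup_cons]
    exact ⟨fun h => hzM (hperm.mem_iff.mp h), hperm.nodup_iff.mpr hMn⟩
  · intro y hy
    rcases List.mem_cons.mp hy with h | h
    · exact Or.inl h
    · refine Or.inr ?_
      rw [hCD]
      rcases List.mem_append.mp h with h | h
      · exact List.mem_append.mpr (Or.inr h)
      · exact List.mem_append.mpr (Or.inl h)
  · simp only [List.length_cons, List.length_append]
    rw [hCD]; simp [List.length_append]; omega

lemma exists_cycle_list (G : SimpleGraph V) (L : List V) (hne : L ≠ [])
    (hc : L.Chain' G.Adj) (hn : L.Nodup) (dflt : V)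
    (i : ℕ) (hi : i + 1 < L.length)
    (hia : G.Adj (L.head hne) (L.getD (i+1) dflt))
    (hib : G.Adj (L.getLast hne) (L.getD i dflt)) :
    ∃ (M : List V) (hMne : M ≠ []), M.Chain' G.Adj ∧ M.Nodup ∧
      (∀ y, y ∈ M ↔ y ∈ L) ∧ M.length = L.length ∧
      G.Adj (M.getLast hMne) (M.head hMne) := by
  have hii : i < L.length := by omega
  have htlen : (L.take (i+1)).length = i + 1 := by rw [List.length_take]; omega
  have htne : L.take (i+1) ≠ [] := by
    intro h; rw [h] at htlen; simp at htlen
  have hdne : L.drop (i+1) ≠ [] := by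
    rw [← List.length_pos_iff]; rw [List.length_drop]; omega
  have hdrne : (L.drop (i+1)).reverse ≠ [] := by
    intro h; exact hdne (List.reverse_eq_nil_iff.mp h)
  have htd : L.take (i+1) ++ L.drop (i+1) = L := List.take_append_drop _ _
  have hMne : L.take (i+1) ++ (L.drop (i+1)).reverse ≠ [] := by
    intro h; rcases List.append_eq_nil_iff.mp h with ⟨h1, _⟩; exact htne h1
  have hperm : (L.take (i+1) ++ (L.drop (i+1)).reverse).Perm L := by
    conv_rhs => rw [← htd]
    exact List.Perm.append_left _ (L.drop (i+1)).reverse_perm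
  have hgetD1 : L.getD (i+1) dflt = L[i+1]'hi := List.getD_eq_getElem L dflt hi
  have hgetD0 : L.getD i dflt = L[i]'hii := List.getD_eq_getElem L dflt hii
  -- last element of take
  have htlastq : (L.take (i+1)).getLast? = some (L[i]'hii) := by
    rw [List.getLast?_eq_getElem?]
    rw [htlen]
    simp only [Nat.add_sub_cancel]
    rw [List.getElem?_take_of_lt (by omega)]
    exact List.getElem?_eq_getElem hii
  have htlast : (L.take (i+1)).getLast htne = L[i]'hii := by
    have := List.getLast?_eq_getLast_of_ne_nil htne
    rw [htlastq, Option.some_inj] at this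
    exact this.symm
  have hdrevhead : (L.drop (i+1)).reverse.head? = some (L.getLast hne) := by
    rw [List.head?_reverse]
    have h1 := List.getLast?_append_of_ne_nil (L.take (i+1)) hdne
    rw [htd] at h1
    rw [← h1]
    exact List.getLast?_eq_getLast_of_ne_nil _
  have hchain : (L.take (i+1) ++ (L.drop (i+1)).reverse).Chain' G.Adj := by
    apply List.IsChain.append
    · exact hc.prefix (L.take_prefix _)
    · rw [List.isChain_reverse]
      exact ((hc.drop (i+1)).imp fun a b h => h.symm)
    · intro p hp q hq
      rw [Option.mem_def, htlastq, Option.some_inj] at hp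
      rw [Option.mem_def, hdrevhead, Option.some_inj] at hq
      rw [← hp, ← hq]
      rw [hgetD0] at hib
      exact hib.symm
  -- head of M
  have hMheadq : (L.take (i+1) ++ (L.drop (i+1)).reverse).head? = some (L.head hne) := by
    obtain ⟨a, s, hts⟩ := List.exists_cons_of_ne_nil htne
    have hLhead : L.head? = some a := by
      rw [← htd, hts]; rfl
    rw [hts]
    simp only [List.cons_append, List.head?_cons]
    rw [List.head?_eq_head hne, Option.some_inj] at hLhead
    rw [hLhead]
  have hMhead : (L.take (i+1) ++ (L.drop (i+1)).reverse).head hMne = L.head hne := by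
    have := List.head?_eq_head hMne
    rw [hMheadq, Option.some_inj] at this
    exact this.symm
  have hMlastq : (L.take (i+1) ++ (L.drop (i+1)).reverse).getLast? = some (L[i+1]'hi) := by
    have h1 := List.getLast?_append_of_ne_nil (L.take (i+1)) hdrne
    rw [h1, List.getLast?_reverse, List.head?_drop]
    exact List.getElem?_eq_getElem hi
  have hMlast : (L.take (i+1) ++ (L.drop (i+1)).reverse).getLast hMne = L[i+1]'hi := by
    have := List.getLast?_eq_getLast_of_ne_nil hMne
    rw [hMlastq, Option.some_inj] at this
    exact this.symm
  refine ⟨_, hMne, hchain, hperm.nodup_iff.mpr hn, fun y => hperm.mem_iff, hperm.length_eq, ?_⟩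
  rw [hMhead, hMlast]
  rw [hgetD1] at hia
  exact hia.symm

lemma getElem_idx_eq (l : List V) (i j : ℕ) (h : i < l.length) (hij : i = j) :
    l[i] = l[j]'(hij ▸ h) := by subst hij; rfl

theorem erdos_gallai_E2 (G : SimpleGraph V) [DecidableRel G.Adj] (k : ℕ) (hk : 1 ≤ k) :
    ∀ (n : ℕ) (U : Finset V), U.card = n →
    (∀ l : List V, l.Chain' G.Adj → l.Nodup → (∀ x ∈ l, x ∈ U) → l.length ≤ 2*k - 1) →
    E2 G U ≤ (2*k - 2) * U.card := by
  intro n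
  induction n using Nat.strong_induction_on with
  | _ n ih =>
  intro U hUcard hfree
  rcases U.eq_empty_or_nonempty with rfl | ⟨u0, hu0⟩
  · simp [E2]
  by_cases hlow : ∃ u ∈ U, 2 * (G.neighborFinset u ∩ U).card ≤ 2*k - 2
  · obtain ⟨u, huU, hudeg⟩ := hlow
    have hU1 : 1 ≤ U.card := card_pos.mpr ⟨u, huU⟩
    have hcard : (U.erase u).card = U.card - 1 := card_erase_of_mem huU
    have hlt : (U.erase u).card < n := by omega
    have hrec := ih _ hlt (U.erase u) rfl
      (fun l hc hn hs => hfree l hc hn (fun x hx => mem_of_mem_erase (hs x hx)))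
    have hmain := E2_erase G U u
    rw [hcard] at hrec
    have hfinal : (2*k-2) * (U.card - 1) + (2*k - 2) = (2*k-2) * U.card := by
      rw [← Nat.mul_succ]
      congr 1
      omega
    omega
  · push_neg at hlow
    have hdegk : ∀ u ∈ U, k ≤ (G.neighborFinset u ∩ U).card := by
      intro u hu; have := hlow u hu; omega
    classical
    -- a maximum-length "good" list
    set P : ℕ → Prop := fun ℓ => ∃ l : List V,
      l.Chain' G.Adj ∧ l.Nodup ∧ (∀ x ∈ l, x ∈ U) ∧ l.length = ℓ with hP
    have hP1 : P 1 := ⟨[u0], List.isChain_singleton _, List.nodup_singleton _,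
      by simpa using hu0, rfl⟩
    have hPbd : ∀ ℓ, P ℓ → ℓ ≤ 2*k-1 := by
      rintro ℓ ⟨l, hc, hn, hs, hl⟩; exact hl ▸ hfree l hc hn hs
    obtain ⟨L, hLc, hLn, hLU, hLlen⟩ : P (Nat.findGreatest P (2*k)) :=
      Nat.findGreatest_spec (m := 1) (by omega) hP1
    have hmax : ∀ l : List V, l.Chain' G.Adj → l.Nodup → (∀ x ∈ l, x ∈ U) →
        l.length ≤ L.length := by
      intro l hc hn hs
      rw [hLlen]
      exact Nat.le_findGreatest ((hPbd _ ⟨l, hc, hn, hs, rfl⟩).trans (by omega))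
        ⟨l, hc, hn, hs, rfl⟩
    have hL1 : 1 ≤ L.length := by
      rw [hLlen]; exact Nat.le_findGreatest (by omega) hP1
    have hLne : L ≠ [] := by
      intro h; rw [h] at hL1; simp at hL1
    have hLbd : L.length ≤ 2*k - 1 := hfree L hLc hLn hLU
    have haU : L.head hLne ∈ U := hLU _ (List.head_mem hLne)
    have hbU : L.getLast hLne ∈ U := hLU _ (List.getLast_mem hLne)
    -- maximality: neighbors of endpoints lie on L
    have hC1 : ∀ z ∈ U, G.Adj z (L.head hLne) → z ∈ L := by
      intro z hz hadj
      by_contra hzL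
      have hchain : (z :: L).Chain' G.Adj := List.isChain_cons.mpr ⟨fun y hy => by
          rw [Option.mem_def, List.head?_eq_head hLne, Option.some_inj] at hy
          rw [← hy]; exact hadj, hLc⟩
      have := hmax _ hchain (List.nodup_cons.mpr ⟨hzL, hLn⟩)
        (by intro x hx
            rcases List.mem_cons.mp hx with rfl | h
            · exact hz
            · exact hLU x h)
      simp at this
    have hC2 : ∀ z ∈ U, G.Adj z (L.getLast hLne) → z ∈ L := by
      intro z hz hadj
      by_contra hzL
      have hchain : (L ++ [z]).Chain' G.Adj := by
        apply List.IsChain.append hLc (List.isChain_singleton z)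
        intro p hp q hq
        rw [Option.mem_def, List.getLast?_eq_getLast_of_ne_nil hLne, Option.some_inj] at hp
        simp only [List.head?_cons, Option.mem_def, Option.some_inj] at hq
        rw [← hp, ← hq]; exact hadj.symm
      have := hmax _ hchain
        (by rw [List.nodup_append]
            exact ⟨hLn, List.nodup_singleton _, fun a ha b hb => by rw [List.mem_singleton] at hb; subst hb; rintro rfl; exact hzL ha⟩)
        (by intro x hx
            rcases List.mem_append.mp hx with h | h
            · exact hLU x h
            · simp only [List.mem_singleton] at h; exact h ▸ hz)
      simp at this
    have hNa : (G.neighborFinset (L.head hLne) ∩ U) ⊆ L.toFinset := by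
      intro z hz
      rw [mem_inter, SimpleGraph.mem_neighborFinset] at hz
      exact List.mem_toFinset.mpr (hC1 z hz.2 hz.1.symm)
    have hNb : (G.neighborFinset (L.getLast hLne) ∩ U) ⊆ L.toFinset := by
      intro z hz
      rw [mem_inter, SimpleGraph.mem_neighborFinset] at hz
      exact List.mem_toFinset.mpr (hC2 z hz.2 hz.1.symm)
    have hL2 : 2 ≤ L.length := by
      by_contra h
      have h1 : L.length = 1 := by omega
      obtain ⟨x, hx⟩ := List.length_eq_one_iff.mp h1
      have hka := hdegk _ haU
      obtain ⟨z, hze⟩ := card_pos.mp (lt_of_lt_of_le (by omega) hka)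
      have hzL := hNa hze
      rw [mem_inter, SimpleGraph.mem_neighborFinset] at hze
      rw [List.mem_toFinset, hx, List.mem_singleton] at hzL
      have hhead : L.head hLne = x := by
        have hm : L.head hLne ∈ L := List.head_mem hLne
        have hm2 : L.head hLne ∈ [x] := by rw [← hx]; exact hm
        exact List.mem_singleton.mp hm2
      rw [hzL, hhead] at hze
      exact G.loopless.irrefl x hze.1
    -- obtain a spanning cycle list M on the vertices of L
    have hMex : ∃ (M : List V) (hMne : M ≠ []), M.Chain' G.Adj ∧ M.Nodup ∧
        (∀ y, y ∈ M ↔ y ∈ L) ∧ M.length = L.length ∧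
        G.Adj (M.getLast hMne) (M.head hMne) := by
      by_cases hba : G.Adj (L.getLast hLne) (L.head hLne)
      · exact ⟨L, hLne, hLc, hLn, fun y => Iff.rfl, rfl, hba⟩
      · -- pigeonhole for a crossing pair of chords
        set I : Finset ℕ := (range (L.length - 1)).filter
          (fun j => G.Adj (L.head hLne) (L.getD (j+1) (L.head hLne))) with hI
        set J : Finset ℕ := (range (L.length - 1)).filter
          (fun j => G.Adj (L.getLast hLne) (L.getD j (L.head hLne))) with hJ
        have hIcard : k ≤ I.card := by
          have := card_le_card_of_injOn (s := G.neighborFinset (L.head hLne) ∩ U) (t := I)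
            (fun z => L.idxOf z - 1) ?_ ?_
          · exact le_trans (hdegk _ haU) this
          · intro z hz
            have hzL : z ∈ L := List.mem_toFinset.mp (hNa hz)
            rw [mem_coe, mem_inter, SimpleGraph.mem_neighborFinset] at hz
            have hidx : L.idxOf z < L.length := List.idxOf_lt_length_iff.mpr hzL
            have hza : z ≠ L.head hLne := fun h => G.loopless.irrefl _ (h ▸ hz.1)
            have h0' : (0:ℕ) < L.length := by omega
            have hidx0 : L.idxOf z ≠ 0 := by
              intro h0
              apply hza
              have hgz : L[L.idxOf z]'hidx = z := List.getElem_idxOf _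
              rw [← hgz, getElem_idx_eq L _ 0 hidx h0]
              exact List.getElem_zero h0'
            rw [hI, mem_coe, mem_filter, mem_range]
            refine ⟨?_, ?_⟩
            · show L.idxOf z - 1 < L.length - 1
              omega
            · show G.Adj (L.head hLne) (L.getD ((L.idxOf z - 1) + 1) (L.head hLne))
              have h1 : L.idxOf z - 1 + 1 = L.idxOf z := by omega
              rw [h1, List.getD_eq_getElem _ _ hidx, List.getElem_idxOf]
              exact hz.1
          · intro z1 h1 z2 h2 heq
            have hz1L : z1 ∈ L := List.mem_toFinset.mp (hNa h1)
            have hz2L : z2 ∈ L := List.mem_toFinset.mp (hNa h2)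
            rw [mem_coe, mem_inter, SimpleGraph.mem_neighborFinset] at h1 h2
            have hidx1 : L.idxOf z1 < L.length := List.idxOf_lt_length_iff.mpr hz1L
            have hidx2 : L.idxOf z2 < L.length := List.idxOf_lt_length_iff.mpr hz2L
            have h0' : (0:ℕ) < L.length := by omega
            have hne1 : L.idxOf z1 ≠ 0 := by
              intro h0
              apply G.loopless.irrefl (L.head hLne)
              have hgz : L[L.idxOf z1]'hidx1 = z1 := List.getElem_idxOf _
              have hz1h : z1 = L.head hLne := by
                rw [← hgz, getElem_idx_eq L _ 0 hidx1 h0]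
                exact List.getElem_zero h0'
              exact hz1h ▸ h1.1
            have hne2 : L.idxOf z2 ≠ 0 := by
              intro h0
              apply G.loopless.irrefl (L.head hLne)
              have hgz : L[L.idxOf z2]'hidx2 = z2 := List.getElem_idxOf _
              have hz2h : z2 = L.head hLne := by
                rw [← hgz, getElem_idx_eq L _ 0 hidx2 h0]
                exact List.getElem_zero h0'
              exact hz2h ▸ h2.1
            change L.idxOf z1 - 1 = L.idxOf z2 - 1 at heq
            have hidxeq : L.idxOf z1 = L.idxOf z2 := by omega
            have e1 : L[L.idxOf z1]'hidx1 = z1 := List.getElem_idxOf _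
            have e2 : L[L.idxOf z2]'hidx2 = z2 := List.getElem_idxOf _
            rw [← e1, ← e2]
            exact getElem_idx_eq L _ _ hidx1 hidxeq
        have hJcard : k ≤ J.card := by
          have := card_le_card_of_injOn (s := G.neighborFinset (L.getLast hLne) ∩ U) (t := J)
            (fun z => L.idxOf z) ?_ ?_
          · exact le_trans (hdegk _ hbU) this
          · intro z hz
            have hzL : z ∈ L := List.mem_toFinset.mp (hNb hz)
            rw [mem_coe, mem_inter, SimpleGraph.mem_neighborFinset] at hz
            have hidx : L.idxOf z < L.length := List.idxOf_lt_length_iff.mpr hzL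
            have hzb : z ≠ L.getLast hLne := fun h => G.loopless.irrefl _ (h ▸ hz.1)
            have hidxlast : L.idxOf z ≠ L.length - 1 := by
              intro h0
              apply hzb
              have hgz : L[L.idxOf z]'hidx = z := List.getElem_idxOf _
              rw [← hgz, List.getLast_eq_getElem]
              exact getElem_idx_eq L _ _ hidx h0
            rw [hJ, mem_coe, mem_filter, mem_range]
            refine ⟨?_, ?_⟩
            · show L.idxOf z < L.length - 1
              omega
            · show G.Adj (L.getLast hLne) (L.getD (L.idxOf z) (L.head hLne))
              rw [List.getD_eq_getElem _ _ hidx, List.getElem_idxOf]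
              exact hz.1
          · intro z1 h1 z2 h2 heq
            have hz1L : z1 ∈ L := List.mem_toFinset.mp (hNb h1)
            have hz2L : z2 ∈ L := List.mem_toFinset.mp (hNb h2)
            have hidx1 : L.idxOf z1 < L.length := List.idxOf_lt_length_iff.mpr hz1L
            have hidx2 : L.idxOf z2 < L.length := List.idxOf_lt_length_iff.mpr hz2L
            change L.idxOf z1 = L.idxOf z2 at heq
            have e1 : L[L.idxOf z1]'hidx1 = z1 := List.getElem_idxOf _
            have e2 : L[L.idxOf z2]'hidx2 = z2 := List.getElem_idxOf _
            rw [← e1, ← e2]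
            exact getElem_idx_eq L _ _ hidx1 heq
        have hIJ : (I ∩ J).Nonempty := by
          rw [← card_pos]
          have h1 : (I ∪ J).card ≤ L.length - 1 := by
            have : I ∪ J ⊆ range (L.length - 1) := by
              apply union_subset
              · rw [hI]; exact filter_subset _ _
              · rw [hJ]; exact filter_subset _ _
            simpa using card_le_card this
          have h2 := card_union_add_card_inter I J
          omega
        obtain ⟨i, hi⟩ := hIJ
        rw [mem_inter, hI, hJ, mem_filter, mem_filter, mem_range] at hi
        obtain ⟨⟨hilt, hia⟩, _, hib⟩ := hi
        exact exists_cycle_list G L hLne hLc hLn (L.head hLne) i (by omega) hia hib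
    obtain ⟨M, hMne, hMc, hMn, hMmem, hMlen, hwrap⟩ := hMex
    -- no edges from L's vertex set to the rest
    have hSU : L.toFinset ⊆ U := fun x hx => hLU x (List.mem_toFinset.mp hx)
    have hnoedge : ∀ z ∈ U, z ∉ L.toFinset → ∀ x ∈ L.toFinset, ¬ G.Adj z x := by
      intro z hz hzS x hx hadj
      obtain ⟨l, lc, ln, lsub, llen⟩ := cycle_rotate G M hMne hMc hMn hwrap z x
        (fun h => hzS (List.mem_toFinset.mpr ((hMmem z).mp h)))
        ((hMmem x).mpr (List.mem_toFinset.mp hx)) hadj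
      have := hmax l lc ln (fun y hy => by
        rcases lsub y hy with rfl | h
        · exact hz
        · exact hLU y ((hMmem y).mp h))
      rw [llen, hMlen] at this
      omega
    have hsplit := E2_split G U L.toFinset hSU hnoedge
    have hScard : L.toFinset.card = L.length := List.toFinset_card_of_nodup hLn
    have hSle : L.toFinset.card ≤ U.card := card_le_card hSU
    have hbound1 : E2 G L.toFinset ≤ (2*k-2) * L.toFinset.card := by
      refine (E2_le_offDiag G _).trans ?_
      have hle : L.toFinset.card - 1 ≤ 2*k-2 := by omega
      calc L.toFinset.card * (L.toFinset.card - 1)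
          ≤ L.toFinset.card * (2*k-2) := Nat.mul_le_mul_left _ hle
        _ = (2*k-2) * L.toFinset.card := mul_comm _ _
    have hbound2 : E2 G (U \ L.toFinset) ≤ (2*k-2) * (U \ L.toFinset).card := by
      apply ih (U \ L.toFinset).card _ _ rfl
      · intro l lc ln ls
        exact hfree l lc ln (fun x hx => (mem_sdiff.mp (ls x hx)).1)
      · rw [card_sdiff_of_subset hSU]
        omega
    rw [hsplit]
    rw [card_sdiff_of_subset hSU] at hbound2
    calc E2 G L.toFinset + E2 G (U \ L.toFinset) ≤
        (2*k-2) * L.toFinset.card + (2*k-2) * (U.card - L.toFinset.card) := by omega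
      _ = (2*k-2) * U.card := by
          rw [← Nat.mul_add, Nat.add_sub_cancel' hSle]


lemma card_ordered_pairs (Γ : SimpleGraph V) [DecidableRel Γ.Adj] :
    ((univ : Finset (V × V)).filter fun p : V × V => Γ.Adj p.1 p.2).card
      = 2 * Γ.edgeFinset.card := by
  rw [← SimpleGraph.dart_card_eq_twice_card_edges, ← Fintype.card_subtype]
  apply Fintype.card_congr
  exact {
    toFun := fun p => ⟨p.1, p.2⟩
    invFun := fun d => ⟨d.toProd, d.adj⟩
    left_inv := fun p => rfl
    right_inv := fun d => rfl }

/-- degree sum over a set splits into inside pairs and crossing pairs. -/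
lemma sum_degree_split (G : SimpleGraph V) [DecidableRel G.Adj] (A : Finset V) :
    ∑ u ∈ A, G.degree u
      = E2 G A + ((A ×ˢ Aᶜ).filter fun p : V × V => G.Adj p.1 p.2).card := by
  have h1 : ∀ u ∈ A, G.degree u = (({u} : Finset V) ×ˢ (G.neighborFinset u)).card := by
    intro u _
    rw [card_product, card_singleton, one_mul, SimpleGraph.degree]
  rw [Finset.sum_congr rfl h1, ← card_biUnion]
  · have h2 : A.biUnion (fun u => ({u} : Finset V) ×ˢ (G.neighborFinset u))
        = (A ×ˢ univ).filter fun p : V × V => G.Adj p.1 p.2 := by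
      ext p
      simp only [mem_biUnion, Finset.mem_product, mem_filter, Finset.mem_singleton,
        SimpleGraph.mem_neighborFinset, mem_univ, true_and, and_true]
      constructor
      · rintro ⟨u, hu, rfl, hadj⟩; exact ⟨hu, hadj⟩
      · rintro ⟨h1, h2⟩; exact ⟨p.1, h1, rfl, h2⟩
    rw [h2]
    have h3 : (A ×ˢ (univ : Finset V)).filter (fun p : V × V => G.Adj p.1 p.2)
        = ((A ×ˢ A).filter fun p : V × V => G.Adj p.1 p.2)
          ∪ ((A ×ˢ Aᶜ).filter fun p : V × V => G.Adj p.1 p.2) := by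
      ext p
      simp only [mem_filter, Finset.mem_product, mem_univ, mem_union, mem_compl, true_and,
        and_true]
      constructor
      · rintro ⟨h1, h2⟩
        by_cases hp : p.2 ∈ A
        · exact Or.inl ⟨⟨h1, hp⟩, h2⟩
        · exact Or.inr ⟨⟨h1, hp⟩, h2⟩
      · rintro (⟨⟨h1, _⟩, h2⟩ | ⟨⟨h1, _⟩, h2⟩) <;> exact ⟨h1, h2⟩
    rw [h3, card_union_of_disjoint]
    · rfl
    · rw [Finset.disjoint_left]
      rintro p hp hp'
      simp only [mem_filter, Finset.mem_product, mem_compl] at hp hp'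
      exact hp'.1.2 hp.1.2
  · intro x hx y hy hxy
    rw [Function.onFun, Finset.disjoint_left]
    rintro p hp hp'
    simp only [Finset.mem_product, Finset.mem_singleton] at hp hp'
    exact hxy (by rw [← hp.1, ← hp'.1])

/-- swap the two crossing counts. -/
lemma cross_symm (G : SimpleGraph V) [DecidableRel G.Adj] (A : Finset V) :
    ((A ×ˢ Aᶜ).filter fun p : V × V => G.Adj p.1 p.2).card
      = ((Aᶜ ×ˢ A).filter fun p : V × V => G.Adj p.1 p.2).card := by
  apply card_bij (fun p _ => p.swap)
  · rintro ⟨x, y⟩ hp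
    simp only [mem_filter, Finset.mem_product] at *
    exact ⟨⟨hp.1.2, hp.1.1⟩, hp.2.symm⟩
  · rintro ⟨x1, y1⟩ h1 ⟨x2, y2⟩ h2 heq
    simpa [Prod.ext_iff, and_comm] using heq
  · rintro ⟨x, y⟩ hp
    refine ⟨(y, x), ?_, rfl⟩
    simp only [mem_filter, Finset.mem_product] at *
    exact ⟨⟨hp.1.2, hp.1.1⟩, hp.2.symm⟩

/-- double counting with degrees as weights. -/
lemma sum_nbhd_degrees (G : SimpleGraph V) [DecidableRel G.Adj] :
    ∑ v, ∑ u ∈ G.neighborFinset v, G.degree u = ∑ u, (G.degree u) * (G.degree u) := by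
  have h1 : ∀ v : V, ∑ u ∈ G.neighborFinset v, G.degree u
      = ∑ u, if G.Adj v u then G.degree u else 0 := by
    intro v
    rw [SimpleGraph.neighborFinset_eq_filter, Finset.sum_filter]
  simp only [h1]
  rw [Finset.sum_comm]
  congr 1
  ext u
  have h2 : ∀ v : V, (if G.Adj v u then G.degree u else 0)
      = (if G.Adj u v then G.degree u else 0) := by
    intro v; congr 1; simp [SimpleGraph.adj_comm]
  simp only [h2]
  rw [← Finset.sum_filter, ← SimpleGraph.neighborFinset_eq_filter, Finset.sum_const,
    smul_eq_mul]
  rw [SimpleGraph.card_neighborFinset_eq_degree]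

/-- The bipartite subgraph of edges crossing `A`. -/
def crossGraph (G : SimpleGraph V) (A : Finset V) : SimpleGraph V where
  Adj a b := G.Adj a b ∧ ¬((a ∈ A) ↔ (b ∈ A))
  symm := by
    constructor
    rintro a b ⟨h1, h2⟩
    exact ⟨h1.symm, fun h => h2 h.symm⟩
  loopless := by
    constructor
    rintro a ⟨_, h2⟩
    exact h2 Iff.rfl

instance (G : SimpleGraph V) [DecidableRel G.Adj] (A : Finset V) :
    DecidableRel (crossGraph G A).Adj := fun a b => by
  unfold crossGraph
  exact instDecidableAnd

lemma crossGraph_le (G : SimpleGraph V) (A : Finset V) : crossGraph G A ≤ G :=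
  fun _ _ h => h.1

lemma crossGraph_colorable (G : SimpleGraph V) (A : Finset V) :
    (crossGraph G A).Colorable 2 := by
  refine ⟨SimpleGraph.Coloring.mk (fun x => if x ∈ A then (0 : Fin 2) else 1) ?_⟩
  intro a b hab
  rcases hab with ⟨_, h2⟩
  by_cases ha : a ∈ A <;> by_cases hb : b ∈ A
  · exact absurd (iff_of_true ha hb) h2
  · simp [ha, hb]
  · simp [ha, hb]
  · exact absurd (iff_of_false ha hb) h2

lemma card_ordered_pairs' (Γ : SimpleGraph V) [DecidableRel Γ.Adj] :
    ((univ : Finset (V × V)).filter fun p : V × V => Γ.Adj p.1 p.2).card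
      = 2 * Γ.edgeFinset.card := by
  rw [← SimpleGraph.dart_card_eq_twice_card_edges, ← Fintype.card_subtype]
  apply Fintype.card_congr
  exact {
    toFun := fun p => ⟨p.1, p.2⟩
    invFun := fun d => ⟨d.toProd, d.adj⟩
    left_inv := fun p => rfl
    right_inv := fun d => rfl }

lemma cross_symm' (G : SimpleGraph V) [DecidableRel G.Adj] (A : Finset V) :
    ((A ×ˢ Aᶜ).filter fun p : V × V => G.Adj p.1 p.2).card
      = ((Aᶜ ×ˢ A).filter fun p : V × V => G.Adj p.1 p.2).card := by
  apply card_bij (fun p _ => p.swap)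
  · rintro ⟨x, y⟩ hp
    simp only [mem_filter, Finset.mem_product] at *
    exact ⟨⟨hp.1.2, hp.1.1⟩, hp.2.symm⟩
  · rintro ⟨x1, y1⟩ h1 ⟨x2, y2⟩ h2 heq
    simpa [Prod.ext_iff, and_comm] using heq
  · rintro ⟨x, y⟩ hp
    refine ⟨(y, x), ?_, rfl⟩
    simp only [mem_filter, Finset.mem_product] at *
    exact ⟨⟨hp.1.2, hp.1.1⟩, hp.2.symm⟩

lemma crossGraph_card (G : SimpleGraph V) [DecidableRel G.Adj] (A : Finset V) :
    (crossGraph G A).edgeFinset.card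
      = ((A ×ˢ Aᶜ).filter fun p : V × V => G.Adj p.1 p.2).card := by
  have hsplit : ((univ : Finset (V × V)).filter fun p : V × V => (crossGraph G A).Adj p.1 p.2)
      = ((A ×ˢ Aᶜ).filter fun p : V × V => G.Adj p.1 p.2)
        ∪ ((Aᶜ ×ˢ A).filter fun p : V × V => G.Adj p.1 p.2) := by
    ext p
    simp only [mem_filter, Finset.mem_product, mem_univ, true_and, mem_union, mem_compl]
    constructor
    · rintro ⟨h1, h2⟩
      by_cases ha : p.1 ∈ A
      · refine Or.inl ⟨⟨ha, fun hb => h2 ?_⟩, h1⟩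
        exact Iff.intro (fun _ => hb) (fun _ => ha)
      · refine Or.inr ⟨⟨ha, ?_⟩, h1⟩
        by_contra hb
        exact h2 (Iff.intro (fun h => absurd h ha) (fun h => absurd h hb))
    · rintro (⟨⟨ha, hb⟩, h⟩ | ⟨⟨ha, hb⟩, h⟩)
      · exact ⟨h, fun hiff => hb (hiff.mp ha)⟩
      · exact ⟨h, fun hiff => ha (hiff.mpr hb)⟩
  have hdisj : Disjoint ((A ×ˢ Aᶜ).filter fun p : V × V => G.Adj p.1 p.2)
      ((Aᶜ ×ˢ A).filter fun p : V × V => G.Adj p.1 p.2) := by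
    rw [Finset.disjoint_left]
    rintro p hp hp'
    simp only [mem_filter, Finset.mem_product, mem_compl] at hp hp'
    exact hp'.1.1 hp.1.1
  have h2 := card_ordered_pairs' (crossGraph G A)
  rw [hsplit, card_union_of_disjoint hdisj, ← cross_symm'] at h2
  omega

end Aux

/-- Concise stability for odd cycles: for `k ≥ 1` and `0 < ε < 1/2`, with `δ = ε/2` and
`n₀ = 2k/ε`, every `C_{2k+1}`-free graph on `n ≥ n₀` vertices with at least `(1/4 − δ)n²`
edges can be made bipartite by deleting at most `εn²` edges. -/
theorem concise_stability_odd_cycles {V : Type*} [Fintype V] [DecidableEq V]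
    (G : SimpleGraph V) [DecidableRel G.Adj] (n : ℕ) (hn : Fintype.card V = n)
    (k : ℕ) (hk : 1 ≤ k) (ε : ℝ) (hε : 0 < ε) (hε' : ε < 1 / 2)
    (hn0 : (n : ℝ) ≥ 2 * k / ε)
    (hfree : ∀ (v : V) (w : G.Walk v v), w.IsCycle → w.length ≠ 2 * k + 1)
    (he : (G.edgeFinset.card : ℝ) ≥ (1 / 4 - ε / 2) * (n : ℝ) ^ 2) :
    ∃ H : SimpleGraph V, H ≤ G ∧ H.Colorable 2 ∧
      (G.edgeFinset.card : ℝ) - (H.edgeSet.ncard : ℝ) ≤ ε * (n : ℝ) ^ 2 := by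
  classical
  have hkε : 2 * (k:ℝ) ≤ ε * n := by
    rw [ge_iff_le, div_le_iff₀ hε] at hn0
    linarith
  have hk1 : (1:ℝ) ≤ k := by exact_mod_cast hk
  have hNpos : (0:ℝ) < n := by nlinarith
  have hnpos : 0 < n := by exact_mod_cast hNpos
  have hVne : (univ : Finset V).Nonempty := by
    rw [← Finset.card_pos, Finset.card_univ, hn]; exact hnpos
  -- Erdős–Gallai for each neighborhood
  have hEG : ∀ v : V, E2 G (G.neighborFinset v) ≤ (2*k-2) * G.degree v := by
    intro v
    have := erdos_gallai_E2 G k hk (G.neighborFinset v).card (G.neighborFinset v) rfl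
      (nbhd_chain_short G k hk hfree v)
    rwa [SimpleGraph.card_neighborFinset_eq_degree] at this
  set m := G.edgeFinset.card with hm
  set φ : V → ℝ := fun v => ((∑ u ∈ G.neighborFinset v, G.degree u : ℕ) : ℝ)
    - ((E2 G (G.neighborFinset v) : ℕ) : ℝ) with hφ
  obtain ⟨v, -, hv⟩ := Finset.exists_max_image univ φ hVne
  -- sum of φ over all vertices
  have hdegsum : ((∑ u, G.degree u : ℕ) : ℝ) = 2 * m := by
    rw [SimpleGraph.sum_degrees_eq_twice_card_edges]; push_cast; ring
  have hsum1 : ((∑ w, ∑ u ∈ G.neighborFinset w, G.degree u : ℕ) : ℝ)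
      = ∑ u, ((G.degree u : ℝ))^2 := by
    rw [sum_nbhd_degrees]
    push_cast
    congr 1; ext u; ring
  have hsum2 : ((∑ w, E2 G (G.neighborFinset w) : ℕ) : ℝ) ≤ (4*k - 4) * m := by
    have h1 : (∑ w, E2 G (G.neighborFinset w)) ≤ ∑ w, (2*k-2) * G.degree w :=
      Finset.sum_le_sum (fun w _ => hEG w)
    have h2 : (∑ w, (2*k-2) * G.degree w) = (2*k-2) * (2*m) := by
      rw [← Finset.mul_sum, SimpleGraph.sum_degrees_eq_twice_card_edges]
    have h3 : ((2*k-2 : ℕ) : ℝ) = 2*(k:ℝ) - 2 := by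
      have : 2 ≤ 2*k := by omega
      push_cast [Nat.cast_sub this]
      ring
    calc ((∑ w, E2 G (G.neighborFinset w) : ℕ) : ℝ) ≤ (((2*k-2) * (2*m) : ℕ) : ℝ) := by
          exact_mod_cast h1.trans (le_of_eq h2)
      _ = (4*k - 4) * m := by push_cast [h3]; ring
  have hCS : (2 * (m:ℝ))^2 ≤ (n:ℝ) * ∑ u, ((G.degree u : ℝ))^2 := by
    have := sq_sum_le_card_mul_sum_sq (s := (univ : Finset V))
      (f := fun u => ((G.degree u : ℝ)))
    rw [Finset.card_univ, hn] at this
    calc (2 * (m:ℝ))^2 = (∑ u, ((G.degree u : ℝ)))^2 := by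
          rw [← hdegsum]; push_cast; ring_nf
      _ ≤ (n:ℝ) * ∑ u, ((G.degree u : ℝ))^2 := this
  -- key averaged estimate
  have hkey : 4*(m:ℝ)^2 - (4*(k:ℝ) - 4) * m * n ≤ (n:ℝ)^2 * φ v := by
    have havg : ∑ w, φ w ≤ (n:ℝ) * φ v := by
      have := Finset.sum_le_card_nsmul univ φ (φ v) (fun u hu => hv u hu)
      rwa [Finset.card_univ, hn, nsmul_eq_mul] at this
    have hsumφ : ∑ w, φ w = (∑ u, ((G.degree u : ℝ))^2)
        - ((∑ w, E2 G (G.neighborFinset w) : ℕ) : ℝ) := by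
      rw [hφ]
      rw [Finset.sum_sub_distrib]
      congr 1
      · rw [← hsum1]; push_cast; rfl
      · push_cast; rfl
    have h5 : (4*(m:ℝ)^2) / n - (4*(k:ℝ) - 4) * m ≤ ∑ w, φ w := by
      rw [hsumφ]
      have h6 : (4*(m:ℝ)^2) / n ≤ ∑ u, ((G.degree u : ℝ))^2 := by
        rw [div_le_iff₀ hNpos]
        calc 4*(m:ℝ)^2 = (2*(m:ℝ))^2 := by ring
          _ ≤ (n:ℝ) * ∑ u, ((G.degree u : ℝ))^2 := hCS
          _ = (∑ u, ((G.degree u : ℝ))^2) * n := by ring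
      linarith [hsum2]
    have h7 : (4*(m:ℝ)^2) / n - (4*(k:ℝ) - 4) * m ≤ (n:ℝ) * φ v := h5.trans havg
    have h8 := mul_le_mul_of_nonneg_left h7 (le_of_lt hNpos)
    calc 4*(m:ℝ)^2 - (4*(k:ℝ) - 4) * m * n
        = (n:ℝ) * ((4*(m:ℝ)^2) / n - (4*(k:ℝ) - 4) * m) := by
          field_simp
      _ ≤ (n:ℝ) * ((n:ℝ) * φ v) := h8
      _ = (n:ℝ)^2 * φ v := by ring
  -- the bipartite subgraph
  set A := G.neighborFinset v with hA
  refine ⟨crossGraph G A, crossGraph_le G A, crossGraph_colorable G A, ?_⟩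
  have hncard : ((crossGraph G A).edgeSet.ncard : ℝ)
      = ((crossGraph G A).edgeFinset.card : ℝ) := by
    congr 1
    rw [Set.ncard_eq_toFinset_card']
    exact congrArg Finset.card (by ext e; simp)
  have hsplitdeg := sum_degree_split G A
  have hcardH : ((crossGraph G A).edgeFinset.card : ℝ)
      = ((∑ u ∈ A, G.degree u : ℕ) : ℝ) - ((E2 G A : ℕ) : ℝ) := by
    rw [crossGraph_card G A]
    rw [hsplitdeg]
    push_cast
    ring
  have hφv : ((m:ℝ)) - ((crossGraph G A).edgeSet.ncard : ℝ) = (m:ℝ) - φ v := by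
    rw [hncard, hcardH, hφ]
  rw [hφv]
  -- final arithmetic
  have hfin : ((m:ℝ) - φ v) * (n:ℝ)^2 ≤ (ε * (n:ℝ)^2) * (n:ℝ)^2 := by
    have h9 : ((m:ℝ) - φ v) * (n:ℝ)^2 = (m:ℝ)*(n:ℝ)^2 - (n:ℝ)^2 * φ v := by ring
    have h10 : (m:ℝ)*(n:ℝ)^2 - (n:ℝ)^2 * φ v
        ≤ (m:ℝ)*(n:ℝ)^2 - (4*(m:ℝ)^2 - (4*(k:ℝ) - 4) * m * n) := by linarith
    have hmpos : (0:ℝ) ≤ m := Nat.cast_nonneg m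
    have h11 : (4*(k:ℝ) - 4) * m * n ≤ 2*ε*(m:ℝ)*(n:ℝ)^2 := by
      have h12 : (4*(k:ℝ) - 4) ≤ 2*ε*n - 4 := by linarith
      have h13 : (0:ℝ) ≤ m * n := mul_nonneg hmpos (le_of_lt hNpos)
      calc (4*(k:ℝ) - 4) * m * n = (4*(k:ℝ) - 4) * (m * n) := by ring
        _ ≤ (2*ε*n - 4) * (m * n) := mul_le_mul_of_nonneg_right h12 h13
        _ = 2*ε*(m:ℝ)*(n:ℝ)^2 - 4*m*n := by ring
        _ ≤ 2*ε*(m:ℝ)*(n:ℝ)^2 := by linarith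
    have hY : (0:ℝ) ≤ (m:ℝ) - (1/4 - ε/2)*(n:ℝ)^2 := by linarith
    have hsos1 : (0:ℝ) ≤ (2*(m:ℝ) - (n:ℝ)^2/2)^2 := sq_nonneg _
    have hsos2 : (0:ℝ) ≤ (1 - 2*ε) * (((m:ℝ) - (1/4 - ε/2)*(n:ℝ)^2) * (n:ℝ)^2) := by
      apply mul_nonneg (by linarith)
      exact mul_nonneg hY (sq_nonneg _)
    have hsos3 : (0:ℝ) ≤ (ε*(n:ℝ)^2)^2 := sq_nonneg _
    nlinarith [hsos1, hsos2, hsos3, h10, h11]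
  have hn2pos : (0:ℝ) < (n:ℝ)^2 := by positivity
  exact le_of_mul_le_mul_right hfin hn2pos
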